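/- Let S be a skew-symmetric 3×3 complex matrix (Sᵀ = −S), let e₁, e₂ ∈ ℂ³ and c ∈ ℂ with c ≠ 0 and c² = (e₁ × e₂) ⬝ (e₁ × e₂), and set N₀ := c⁻¹ • (e₁ × e₂). If e₁ ⬝ (S.mulVec e₂) = 0, then S = α (N₀ × S.mulVec N₀); equivalently, S.mulVec a = (N₀ × S.mulVec N₀) × a for every a ∈ ℂ³. -/

import Mathlib

open Matrix

/-- The symmetric bilinear dot product on ℂ³ (not the Hermitian inner product). -/
def dot3 (x y : Fin 3 → ℂ) : ℂ := x 0 * y 0 + x 1 * y 1 + x 2 * y 2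

/-- The standard cross product on ℂ³. -/
def cross3 (x y : Fin 3 → ℂ) : Fin 3 → ℂ := crossProduct x y

/-- The hat map α : ℂ³ → o₃(ℂ). -/
def hat (x : Fin 3 → ℂ) : Matrix (Fin 3) (Fin 3) ℂ :=
  !![0, -x 2, x 1; x 2, 0, -x 0; -x 1, x 0, 0]

/-!
A skew-symmetric `S` is `hat w` for its axial vector `w`, so `S a = w × a`. The hypothesis is the
triple product `e₁ ⬝ (w × e₂) = -w ⬝ (e₁ × e₂)`, hence `w ⟂ N₀`; as `N₀ ⬝ N₀ = 1`, the
expansion `N₀ × (w × N₀) = (N₀ ⬝ N₀) w - (w ⬝ N₀) N₀` returns `w`.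
-/

lemma dot3_eq_dotProduct (x y : Fin 3 → ℂ) : dot3 x y = x ⬝ᵥ y := by
  rw [dot3, vec3_dotProduct]

lemma hat_mulVec (x v : Fin 3 → ℂ) : hat x *ᵥ v = cross3 x v := by
  ext i
  fin_cases i <;> simp [hat, cross3, cross_apply, mulVec, dotProduct, Fin.sum_univ_three] <;> ring

def axial (S : Matrix (Fin 3) (Fin 3) ℂ) : Fin 3 → ℂ := ![S 2 1, S 0 2, S 1 0]

lemma hat_axial_of_transpose_eq_neg {S : Matrix (Fin 3) (Fin 3) ℂ} (hS : Sᵀ = -S) :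
    hat (axial S) = S := by
  have hsk : ∀ i j, S j i = -S i j := fun i j => congrFun (congrFun hS i) j
  have hdiag : ∀ i, S i i = 0 := fun i => by linear_combination hsk i i / 2
  ext i j
  fin_cases i <;> fin_cases j <;> simp [hat, axial, hdiag, hsk 1 0, hsk 2 0, hsk 2 1]

theorem cross_cross_eq_of_unit_of_orthogonal {R : Type*} [CommRing R] {n w : Fin 3 → R}
    (hn : n ⬝ᵥ n = 1) (hw : w ⬝ᵥ n = 0) : n ⨯₃ (w ⨯₃ n) = w := by
  rw [cross_cross_eq_smul_sub_smul', hn, hw, one_smul, zero_smul, sub_zero]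

/-- A skew-symmetric matrix S with e₁ ⬝ (S e₂) = 0 equals α(N₀ × S N₀), where
N₀ is the unit normal of the frame e₁, e₂. -/
theorem skew_eq_hat_of_tangential (S : Matrix (Fin 3) (Fin 3) ℂ) (hS : Sᵀ = -S)
    (e₁ e₂ : Fin 3 → ℂ) (c : ℂ) (hc : c ≠ 0)
    (hc2 : c ^ 2 = dot3 (cross3 e₁ e₂) (cross3 e₁ e₂))
    (N₀ : Fin 3 → ℂ) (hN₀ : N₀ = c⁻¹ • cross3 e₁ e₂)
    (h : dot3 e₁ (S.mulVec e₂) = 0) :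
    S = hat (cross3 N₀ (S.mulVec N₀)) ∧
      ∀ a : Fin 3 → ℂ, S.mulVec a = cross3 (cross3 N₀ (S.mulVec N₀)) a := by
  have hSw : S = hat (axial S) := (hat_axial_of_transpose_eq_neg hS).symm
  set w := axial S
  have hNN : N₀ ⬝ᵥ N₀ = 1 := by
    rw [hN₀, smul_dotProduct, dotProduct_smul, ← dot3_eq_dotProduct, ← hc2, smul_eq_mul,
      smul_eq_mul, ← mul_assoc, ← sq, ← mul_pow, inv_mul_cancel₀ hc, one_pow]
  have hwN : w ⬝ᵥ N₀ = 0 := by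
    rw [hSw, dot3_eq_dotProduct, hat_mulVec, cross3, triple_product_permutation,
      ← cross_anticomm, dotProduct_neg, neg_eq_zero] at h
    rw [hN₀, dotProduct_smul, cross3, h, smul_zero]
  have hω : cross3 N₀ (S *ᵥ N₀) = w := by
    rw [hSw, hat_mulVec, cross3, cross3, cross_cross_eq_of_unit_of_orthogonal hNN hwN]
  rw [hω]
  exact ⟨hSw, fun a => by rw [← hat_mulVec, ← hSw]⟩
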